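/- Let p, q : ℝⁿ → [1,∞] be measurable with q⁻ := ess-inf q > 0 (in fact q⁻ ≥ 1), let 0 < a < 1, and (g_m)_{m∈ℕ₀} ∈ ℓ^{q(·)}(L^{p(·)}). Define G_j(x) = Σ_{m ≥ j} a^{m−j} g_m(x) and H_j(x) = Σ_{m ≤ j} a^{j−m} g_m(x). Then ‖(G_j)_j‖_{ℓ^{q(·)}(L^{p(·)})} + ‖(H_j)_j‖_{ℓ^{q(·)}(L^{p(·)})} ≲ ‖(g_m)_m‖_{ℓ^{q(·)}(L^{p(·)})}, with the implicit constant depending only on a and q⁻. -/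

import Mathlib

open MeasureTheory ENNReal Filter
open scoped SchwartzMap FourierTransform

noncomputable section

/-- Euclidean space ℝⁿ. -/
abbrev En (n : ℕ) := EuclideanSpace ℝ (Fin n)

/-- `ω_p(t)`: `t^p` for finite `p`; for `p = ∞` it is `0` if `t ≤ 1` and `∞` otherwise. -/
def omegaP (p t : ℝ≥0∞) : ℝ≥0∞ :=
  if p = ∞ then (if t ≤ 1 then 0 else ∞) else t ^ p.toReal

/-- Variable exponent modular `ρ_{p(·)}` on nonnegative (ℝ≥0∞-valued) functions. -/
def rhoP {n : ℕ} (p : En n → ℝ≥0∞) (F : En n → ℝ≥0∞) : ℝ≥0∞ :=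
  ∫⁻ x, omegaP (p x) (F x)

/-- Luxemburg norm for the variable exponent Lebesgue space. -/
def luxNorm {n : ℕ} (p : En n → ℝ≥0∞) (F : En n → ℝ≥0∞) : ℝ≥0∞ :=
  sInf {l : ℝ≥0∞ | 0 < l ∧ rhoP p (fun x => F x / l) ≤ 1}

/-- The nonnegative absolute value of a real function, as an ℝ≥0∞-valued function. -/
def nnAbs {n : ℕ} (f : En n → ℝ) : En n → ℝ≥0∞ := fun x => ENNReal.ofReal |f x|

/-- Modular of the mixed Lebesgue-sequence space `ℓ^{q(·)}(L^{p(·)})`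
(convention `λ^{1/∞} = λ^0 = 1`). -/
def mixedModular {n : ℕ} (q p : En n → ℝ≥0∞) (F : ℕ → En n → ℝ≥0∞) : ℝ≥0∞ :=
  ∑' j, sInf {l : ℝ≥0∞ | 0 < l ∧ rhoP p (fun x => F j x / l ^ ((q x)⁻¹).toReal) ≤ 1}

/-- Quasi-norm of the mixed Lebesgue-sequence space `ℓ^{q(·)}(L^{p(·)})`. -/
def mixedNorm {n : ℕ} (q p : En n → ℝ≥0∞) (F : ℕ → En n → ℝ≥0∞) : ℝ≥0∞ :=
  sInf {m : ℝ≥0∞ | 0 < m ∧ mixedModular q p (fun j x => F j x / m) ≤ 1}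

/-- `g` is locally log-Hölder continuous with constant `c`. -/
def LocLogHolder {n : ℕ} (c : ℝ) (g : En n → ℝ) : Prop :=
  0 < c ∧ ∀ x y : En n, |g x - g y| ≤ c / Real.log (Real.exp 1 + 1 / ‖x - y‖)

/-- `g ∈ C^log_loc(ℝⁿ)`. -/
def ClogLoc {n : ℕ} (g : En n → ℝ) : Prop := ∃ c, LocLogHolder c g

/-- `g` is globally log-Hölder continuous: locally log-Hölder plus the log-Hölder
decay condition at infinity. -/
def GlobLogHolder {n : ℕ} (g : En n → ℝ) : Prop :=
  ClogLoc g ∧ ∃ c g_inf : ℝ, 0 < c ∧ ∀ x : En n, |g x - g_inf| ≤ c / Real.log (Real.exp 1 + ‖x‖)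

/-- A measurable variable exponent `p : ℝⁿ → [1,∞]`. -/
def IsExponent {n : ℕ} (p : En n → ℝ≥0∞) : Prop := Measurable p ∧ ∀ x, 1 ≤ p x

/-- `p ∈ 𝒫^log(ℝⁿ)`: a variable exponent with `1/p` globally log-Hölder continuous. -/
def Plog {n : ℕ} (p : En n → ℝ≥0∞) : Prop :=
  IsExponent p ∧ GlobLogHolder (fun x => ((p x)⁻¹).toReal)

/-- Convolution of two real functions. -/
def conv {n : ℕ} (φ f : En n → ℝ) (x : En n) : ℝ := ∫ y, φ (x - y) * f y

/-- Partial derivative in the `k`-th coordinate direction. -/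
def pderiv {n : ℕ} (k : Fin n) (f : En n → ℝ) (x : En n) : ℝ :=
  fderiv ℝ f x (EuclideanSpace.single k 1)

/-- Besov quasi-norm with variable smoothness and integrability, relative to a
system `(φ_j)_j`. -/
def besovNorm {n : ℕ} (φ : ℕ → En n → ℝ) (s : En n → ℝ) (q p : En n → ℝ≥0∞)
    (g : En n → ℝ) : ℝ≥0∞ :=
  mixedNorm q p (fun j x => ENNReal.ofReal ((2:ℝ) ^ ((j:ℝ) * s x) * |conv (φ j) g x|))

/-- A smooth dyadic resolution of unity `(ℱφ_j)_j`. -/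
structure DyadicResolution (n : ℕ) where
  φ : ℕ → 𝓢(En n, ℝ)
  supp_zero : ∀ ξ : En n, 2 < ‖ξ‖ → 𝓕 (fun y => (φ 0 y : ℂ)) ξ = 0
  supp_pos : ∀ j : ℕ, 0 < j → ∀ ξ : En n,
      (‖ξ‖ < (2:ℝ) ^ ((j:ℤ) - 1) ∨ (2:ℝ) ^ ((j:ℤ) + 1) < ‖ξ‖) →
      𝓕 (fun y => (φ j y : ℂ)) ξ = 0
  sum_one : ∀ ξ : En n, ∑' j, 𝓕 (fun y => (φ j y : ℂ)) ξ = 1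

/-- The commutator `[V·∇, Δ_j]f` relative to a convolution kernel `φj`. -/
def commVf {n : ℕ} (φj : En n → ℝ) (V : Fin n → En n → ℝ) (f : En n → ℝ)
    (x : En n) : ℝ :=
  ∑ k, (V k x * pderiv k (conv φj f) x - conv φj (fun y => V k y * pderiv k f y) x)

end

/-!
Put `d = √a`, so that `a ^ i = (d ^ i) ^ 2`, and let `w i = (1 - d) * d ^ i`; these weights sum
to `1`. The summands `inf {λ | ρ_p(f / λ^{1/q}) ≤ 1}` of the modular are subconvex: if
`F ≤ ∑ w i ^ 2 * u i`, the summand at `F` is at most `∑ w i * (summand at u i)`. This is Jensen's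
inequality for `ω_p` (weights of total mass at most `1`), the second factor `w i` being absorbed
by the scale since `w i ≤ w i ^ (1/q)` for `q ≥ 1`. Both `G` and `H` at scale `(1 - d)⁻² M` are
dominated in this way by index shifts of `g / M`, and shifting does not increase the modular, so
each of the two norms is at most `(1 - d)⁻²` times that of `g`.
-/

namespace ENNReal

theorem rpow_sum_mul_le_sum_mul_rpow {ι : Type*} (s : Finset ι) (w z : ι → ℝ≥0∞)
    (hw : ∑ i ∈ s, w i ≤ 1) {r : ℝ} (hr : 1 ≤ r) :
    (∑ i ∈ s, w i * z i) ^ r ≤ ∑ i ∈ s, w i * z i ^ r := by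
  -- add a point carrying the missing weight `1 - ∑ w`, where `z` vanishes
  have h := rpow_arith_mean_le_arith_mean_rpow (Finset.insertNone s)
    (fun o => o.elim (1 - ∑ i ∈ s, w i) w) (fun o => o.elim 0 z)
    (by rw [Finset.sum_insertNone]; exact tsub_add_cancel_of_le hw) hr
  simpa [Finset.sum_insertNone, zero_rpow_of_pos (zero_lt_one.trans_le hr)] using h

theorem rpow_tsum_mul_le_tsum_mul_rpow {ι : Type*} (w z : ι → ℝ≥0∞) (hw : ∑' i, w i ≤ 1)
    {r : ℝ} (hr : 1 ≤ r) : (∑' i, w i * z i) ^ r ≤ ∑' i, w i * z i ^ r := by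
  have hr0 : 0 < r := zero_lt_one.trans_le hr
  rw [← le_rpow_inv_iff hr0, ENNReal.tsum_eq_iSup_sum]
  refine iSup_le fun s => (le_rpow_inv_iff hr0).2 ?_
  exact (rpow_sum_mul_le_sum_mul_rpow s w z ((ENNReal.sum_le_tsum s).trans hw) hr).trans
    (ENNReal.sum_le_tsum s)

theorem div_rpow_tsum_le_tsum_mul_div_rpow {ι : Type*} {e : ℝ} (he0 : 0 ≤ e) (he1 : e ≤ 1)
    {w μ u : ι → ℝ≥0∞} (hw1 : ∀ i, w i ≤ 1) (hμ0 : ∀ i, μ i ≠ 0) (hμt : ∀ i, μ i ≠ ∞)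
    {y : ℝ≥0∞} (hy : y ≤ ∑' i, w i ^ 2 * u i) :
    y / (∑' i, w i * μ i) ^ e ≤ ∑' i, w i * (u i / μ i ^ e) := by
  refine ENNReal.div_le_of_le_mul (hy.trans ?_)
  rw [← ENNReal.tsum_mul_right]
  refine ENNReal.tsum_le_tsum fun i => ?_
  have hμe0 : μ i ^ e ≠ 0 := (rpow_pos (pos_iff_ne_zero.2 (hμ0 i)) (hμt i)).ne'
  have hμet : μ i ^ e ≠ ∞ := rpow_ne_top_of_nonneg he0 (hμt i)
  have hwμ : w i * μ i ^ e ≤ (∑' i, w i * μ i) ^ e :=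
    calc w i * μ i ^ e ≤ w i ^ e * μ i ^ e := by
          gcongr; simpa using rpow_le_rpow_of_exponent_ge (hw1 i) he1
      _ = (w i * μ i) ^ e := (mul_rpow_of_nonneg _ _ he0).symm
      _ ≤ _ := rpow_le_rpow (ENNReal.le_tsum i) he0
  calc w i ^ 2 * u i = w i * (u i / μ i ^ e) * (w i * μ i ^ e) := by
        rw [mul_mul_mul_comm, ENNReal.div_mul_cancel hμe0 hμet, sq]
    _ ≤ w i * (u i / μ i ^ e) * (∑' i, w i * μ i) ^ e := by gcongr

theorem tsum_one_sub_mul_pow {d : ℝ≥0∞} (hd1 : d < 1) : ∑' i, (1 - d) * d ^ i = 1 := by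
  rw [ENNReal.tsum_mul_left, ENNReal.tsum_geometric,
    ENNReal.mul_inv_cancel (tsub_pos_of_lt hd1).ne' (sub_ne_top one_ne_top)]

theorem tsum_pow_sq_mul_div {d : ℝ≥0∞} (hd1 : d < 1) (y : ℕ → ℝ≥0∞) (M : ℝ≥0∞) :
    (∑' i, (d ^ i) ^ 2 * y i) / (((1 - d) ^ 2)⁻¹ * M)
      = ∑' i, ((1 - d) * d ^ i) ^ 2 * (y i / M) := by
  have h1d : (1 - d) ^ 2 ≠ 0 := pow_ne_zero _ (tsub_pos_of_lt hd1).ne'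
  rw [div_eq_mul_inv, ENNReal.mul_inv (Or.inl (by simp)) (Or.inl (inv_ne_top.2 h1d)), inv_inv,
    ← ENNReal.tsum_mul_right]
  refine tsum_congr fun i => ?_
  rw [div_eq_mul_inv]
  ring

theorem sum_range_mul_le_tsum_mul_ite (c g : ℕ → ℝ≥0∞) (j : ℕ) :
    ∑ m ∈ Finset.range (j + 1), c (j - m) * g m ≤ ∑' i, c i * if i ≤ j then g (j - i) else 0 := by
  rw [← Finset.sum_range_reflect]
  refine le_of_eq_of_le (Finset.sum_congr rfl fun i hi => ?_) (ENNReal.sum_le_tsum _)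
  have hij : i ≤ j := Nat.lt_succ_iff.mp (Finset.mem_range.mp hi)
  simp [hij, Nat.sub_sub_self hij]

end ENNReal

theorem omegaP_mono (P : ℝ≥0∞) {s t : ℝ≥0∞} (h : s ≤ t) : omegaP P s ≤ omegaP P t := by
  unfold omegaP
  split_ifs with hP hs ht ht
  · exact le_rfl
  · exact le_top
  · exact absurd (h.trans ht) hs
  · exact le_rfl
  · exact rpow_le_rpow h toReal_nonneg

theorem omegaP_zero {P : ℝ≥0∞} (hP : 1 ≤ P) : omegaP P 0 = 0 := by
  by_cases h : P = ∞
  · simp [omegaP, h]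
  · simp [omegaP, h, zero_rpow_of_pos (toReal_pos (one_pos.trans_le hP).ne' h)]

theorem omegaP_tsum_mul_le {ι : Type*} {P : ℝ≥0∞} (hP : 1 ≤ P) (w z : ι → ℝ≥0∞) (hw0 : ∀ i, w i ≠ 0)
    (hw : ∑' i, w i ≤ 1) : omegaP P (∑' i, w i * z i) ≤ ∑' i, w i * omegaP P (z i) := by
  by_cases hP' : P = ∞
  · simp only [omegaP, hP', if_true]
    by_cases hz : ∀ i, z i ≤ 1
    · have hle : ∑' i, w i * z i ≤ 1 :=
        (ENNReal.tsum_le_tsum fun i => mul_le_of_le_one_right' (hz i)).trans hw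
      rw [if_pos hle]
      exact zero_le
    · push Not at hz
      obtain ⟨i, hi⟩ := hz
      calc _ ≤ ∞ := le_top
        _ = w i * if z i ≤ 1 then 0 else ∞ := by rw [if_neg hi.not_ge, mul_top (hw0 i)]
        _ ≤ _ := ENNReal.le_tsum (f := fun i => w i * if z i ≤ 1 then 0 else ∞) i
  · simp only [omegaP, hP', if_false]
    exact rpow_tsum_mul_le_tsum_mul_rpow w z hw (by simpa using toReal_mono hP' hP)

theorem measurable_omegaP {α : Type*} [MeasurableSpace α] {p F : α → ℝ≥0∞} (hp : Measurable p)
    (hF : Measurable F) : Measurable fun x => omegaP (p x) (F x) := by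
  unfold omegaP
  refine Measurable.ite (hp (measurableSet_singleton ∞)) ?_ (hF.pow hp.ennreal_toReal)
  exact Measurable.ite (measurableSet_le hF measurable_const) measurable_const measurable_const

section MixedModular

variable {n : ℕ} {p q : En n → ℝ≥0∞}

theorem rhoP_mono {F G : En n → ℝ≥0∞} (h : ∀ x, F x ≤ G x) : rhoP p F ≤ rhoP p G :=
  lintegral_mono fun x => omegaP_mono _ (h x)

theorem rhoP_zero (hp : ∀ x, 1 ≤ p x) : rhoP p (fun _ => 0) = 0 := by
  simp [rhoP, omegaP_zero (hp _)]

noncomputable def mixedTerm (q p : En n → ℝ≥0∞) (f : En n → ℝ≥0∞) : ℝ≥0∞ :=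
  sInf {l : ℝ≥0∞ | 0 < l ∧ rhoP p (fun x => f x / l ^ ((q x)⁻¹).toReal) ≤ 1}

theorem mixedModular_eq_tsum (q p : En n → ℝ≥0∞) (F : ℕ → En n → ℝ≥0∞) :
    mixedModular q p F = ∑' j, mixedTerm q p (F j) := rfl

theorem mixedTerm_le {f : En n → ℝ≥0∞} {l : ℝ≥0∞} (hl : 0 < l)
    (h : rhoP p (fun x => f x / l ^ ((q x)⁻¹).toReal) ≤ 1) : mixedTerm q p f ≤ l :=
  sInf_le ⟨hl, h⟩

theorem rhoP_div_rpow_le_one_of_mixedTerm_lt {f : En n → ℝ≥0∞} {l : ℝ≥0∞}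
    (h : mixedTerm q p f < l) : rhoP p (fun x => f x / l ^ ((q x)⁻¹).toReal) ≤ 1 := by
  obtain ⟨l₀, ⟨-, hl₀⟩, hl₀l⟩ := sInf_lt_iff.mp h
  exact (rhoP_mono fun x => ENNReal.div_le_div_left
    (rpow_le_rpow hl₀l.le toReal_nonneg) _).trans hl₀

theorem mixedTerm_zero (hp : ∀ x, 1 ≤ p x) : mixedTerm q p (fun _ => 0) = 0 :=
  le_antisymm (ENNReal.le_of_forall_pos_le_add fun ε hε _ => by
    simpa using mixedTerm_le (f := fun _ => 0) (q := q) (by exact_mod_cast hε)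
      (by simp [rhoP_zero hp])) zero_le

theorem mixedModular_comp_add_le (F : ℕ → En n → ℝ≥0∞) (i : ℕ) :
    mixedModular q p (fun j => F (j + i)) ≤ mixedModular q p F :=
  ENNReal.tsum_comp_le_tsum_of_injective (add_left_injective i) fun m => mixedTerm q p (F m)

theorem mixedModular_shift_right_eq (hp : ∀ x, 1 ≤ p x) (F : ℕ → En n → ℝ≥0∞) (i : ℕ) :
    mixedModular q p (fun j x => if i ≤ j then F (j - i) x else 0) = mixedModular q p F := by
  rw [mixedModular_eq_tsum, ← ENNReal.summable.sum_add_tsum_nat_add' (k := i)]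
  rw [Finset.sum_eq_zero fun j hj => ?_]
  · simp [mixedModular_eq_tsum]
  · simp [(Finset.mem_range.1 hj).not_ge, mixedTerm_zero hp]

theorem rhoP_div_rpow_tsum_le_one (hp : IsExponent p) (hq : IsExponent q) {w : ℕ → ℝ≥0∞}
    (hw0 : ∀ i, w i ≠ 0) (hw : ∑' i, w i ≤ 1) {u : ℕ → En n → ℝ≥0∞}
    (hu : ∀ i, Measurable (u i)) {μ : ℕ → ℝ≥0∞} (hμ : ∀ i, mixedTerm q p (u i) < μ i)
    (hμt : ∀ i, μ i ≠ ∞) {F : En n → ℝ≥0∞} (hF : ∀ x, F x ≤ ∑' i, w i ^ 2 * u i x) :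
    rhoP p (fun x => F x / (∑' i, w i * μ i) ^ ((q x)⁻¹).toReal) ≤ 1 := by
  have hw1 : ∀ i, w i ≤ 1 := fun i => (ENNReal.le_tsum i).trans hw
  have he1 : ∀ x, ((q x)⁻¹).toReal ≤ 1 := fun x =>
    toReal_le_of_le_ofReal zero_le_one (by simpa using ENNReal.inv_le_one.2 (hq.2 x))
  have hmeas : ∀ i, Measurable fun x => omegaP (p x) (u i x / μ i ^ ((q x)⁻¹).toReal) :=
    fun i => measurable_omegaP hp.1 ((hu i).div (measurable_const.pow hq.1.inv.ennreal_toReal))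
  calc rhoP p (fun x => F x / (∑' i, w i * μ i) ^ ((q x)⁻¹).toReal)
      ≤ rhoP p (fun x => ∑' i, w i * (u i x / μ i ^ ((q x)⁻¹).toReal)) :=
        rhoP_mono fun x => div_rpow_tsum_le_tsum_mul_div_rpow toReal_nonneg (he1 x) hw1
          (fun i => (zero_le.trans_lt (hμ i)).ne') hμt (hF x)
    _ ≤ ∫⁻ x, ∑' i, w i * omegaP (p x) (u i x / μ i ^ ((q x)⁻¹).toReal) :=
        lintegral_mono fun x => omegaP_tsum_mul_le (hp.2 x) w _ hw0 hw
    _ = ∑' i, w i * rhoP p (fun x => u i x / μ i ^ ((q x)⁻¹).toReal) := by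
        rw [lintegral_tsum fun i => ((hmeas i).const_mul _).aemeasurable]
        exact tsum_congr fun i => lintegral_const_mul _ (hmeas i)
    _ ≤ ∑' i, w i * 1 := by
        gcongr with i
        exact rhoP_div_rpow_le_one_of_mixedTerm_lt (hμ i)
    _ ≤ 1 := by simpa using hw

theorem mixedTerm_le_tsum_mul (hp : IsExponent p) (hq : IsExponent q) {w : ℕ → ℝ≥0∞}
    (hw0 : ∀ i, w i ≠ 0) (hw : ∑' i, w i ≤ 1) {u : ℕ → En n → ℝ≥0∞}
    (hu : ∀ i, Measurable (u i)) {F : En n → ℝ≥0∞} (hF : ∀ x, F x ≤ ∑' i, w i ^ 2 * u i x) :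
    mixedTerm q p F ≤ ∑' i, w i * mixedTerm q p (u i) := by
  refine ENNReal.le_of_forall_pos_le_add fun δ hδ hlt => ?_
  have hδ0 : (δ : ℝ≥0∞) ≠ 0 := by exact_mod_cast hδ.ne'
  have hfin : ∀ i, mixedTerm q p (u i) ≠ ∞ := fun i htop =>
    (ENNReal.le_tsum (f := fun i => w i * mixedTerm q p (u i)) i).not_gt
      (by simpa [htop, mul_top (hw0 i)] using hlt)
  have hpos : 0 < ∑' i, w i * (mixedTerm q p (u i) + δ) :=
    (ENNReal.mul_pos (hw0 0) (by simp [hδ0])).trans_le (ENNReal.le_tsum 0)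
  calc mixedTerm q p F ≤ ∑' i, w i * (mixedTerm q p (u i) + δ) :=
        mixedTerm_le hpos (rhoP_div_rpow_tsum_le_one hp hq hw0 hw hu
          (fun i => ENNReal.lt_add_right (hfin i) hδ0)
          (fun i => add_ne_top.2 ⟨hfin i, coe_ne_top⟩) hF)
    _ = ∑' i, w i * mixedTerm q p (u i) + (∑' i, w i) * δ := by
        simp only [mul_add, ENNReal.tsum_add, ENNReal.tsum_mul_right]
    _ ≤ ∑' i, w i * mixedTerm q p (u i) + δ := by
        gcongr
        simpa using mul_le_mul_left hw (δ : ℝ≥0∞)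

theorem mixedModular_le_tsum_mul (hp : IsExponent p) (hq : IsExponent q) {w : ℕ → ℝ≥0∞}
    (hw0 : ∀ i, w i ≠ 0) (hw : ∑' i, w i ≤ 1) {u : ℕ → ℕ → En n → ℝ≥0∞}
    (hu : ∀ j i, Measurable (u j i)) {F : ℕ → En n → ℝ≥0∞}
    (hF : ∀ j x, F j x ≤ ∑' i, w i ^ 2 * u j i x) :
    mixedModular q p F ≤ ∑' i, w i * mixedModular q p (fun j => u j i) :=
  calc mixedModular q p F ≤ ∑' j, ∑' i, w i * mixedTerm q p (u j i) :=
        ENNReal.tsum_le_tsum fun j => mixedTerm_le_tsum_mul hp hq hw0 hw (hu j) (hF j)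
    _ = _ := by
        rw [ENNReal.tsum_comm]
        simp only [mixedModular_eq_tsum, ENNReal.tsum_mul_left]

theorem mixedNorm_le_mul_of_mixedModular_le_one {g G : ℕ → En n → ℝ≥0∞} {c : ℝ≥0∞}
    (hc0 : c ≠ 0) (hct : c ≠ ∞)
    (h : ∀ M, 0 < M → mixedModular q p (fun j x => g j x / M) ≤ 1 →
      mixedModular q p (fun j x => G j x / (c * M)) ≤ 1) :
    mixedNorm q p G ≤ c * mixedNorm q p g := by
  rw [← ENNReal.div_le_iff' hc0 hct]
  exact le_sInf fun M ⟨hM, hmod⟩ =>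
    ENNReal.div_le_of_le_mul' (sInf_le ⟨ENNReal.mul_pos hc0 hM.ne', h M hM hmod⟩)

theorem mixedNorm_le_of_le_tsum_geometric (hp : IsExponent p) (hq : IsExponent q) {d : ℝ≥0∞}
    (hd0 : d ≠ 0) (hd1 : d < 1) {g G : ℕ → En n → ℝ≥0∞} (u : ℕ → ℕ → En n → ℝ≥0∞)
    (hu : ∀ j i, Measurable (u j i)) (hG : ∀ j x, G j x ≤ ∑' i, (d ^ i) ^ 2 * u j i x)
    (hug : ∀ M i, mixedModular q p (fun j x => u j i x / M)
      ≤ mixedModular q p (fun j x => g j x / M)) :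
    mixedNorm q p G ≤ ((1 - d) ^ 2)⁻¹ * mixedNorm q p g := by
  have hw := tsum_one_sub_mul_pow hd1
  have h1d : (1 - d) ^ 2 ≠ 0 := pow_ne_zero _ (tsub_pos_of_lt hd1).ne'
  refine mixedNorm_le_mul_of_mixedModular_le_one (by simp) (inv_ne_top.2 h1d) fun M _ hM => ?_
  calc mixedModular q p (fun j x => G j x / (((1 - d) ^ 2)⁻¹ * M))
      ≤ ∑' i, (1 - d) * d ^ i * mixedModular q p (fun j x => u j i x / M) :=
        mixedModular_le_tsum_mul hp hq
          (fun i => mul_ne_zero (tsub_pos_of_lt hd1).ne' (pow_ne_zero i hd0)) hw.le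
          (fun j i => (hu j i).div_const M) fun j x => by
            rw [← tsum_pow_sq_mul_div hd1]
            gcongr
            exact hG j x
    _ ≤ ∑' i, (1 - d) * d ^ i * 1 := by
        gcongr with i
        exact (hug M i).trans hM
    _ = 1 := by simpa using hw

end MixedModular

/-- Hardy-type inequality in `ℓ^{q(·)}(L^{p(·)})`. -/
theorem stmt11 {n : ℕ} (p q : En n → ℝ≥0∞) (hp : IsExponent p) (hq : IsExponent q)
    (a : ℝ) (ha0 : 0 < a) (ha1 : a < 1) :
    ∃ c : ℝ≥0∞, c ≠ ∞ ∧ ∀ g : ℕ → En n → ℝ≥0∞,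
      (∀ m, Measurable (g m)) → mixedNorm q p g ≠ ∞ →
      mixedNorm q p (fun j x => ∑' i : ℕ, ENNReal.ofReal a ^ i * g (j + i) x)
        + mixedNorm q p (fun j x => ∑ m ∈ Finset.range (j + 1),
            ENNReal.ofReal a ^ (j - m) * g m x)
        ≤ c * mixedNorm q p g := by
  set d := ENNReal.ofReal (Real.sqrt a)
  have hd0 : d ≠ 0 := by simpa [d] using ha0
  have hd1 : d < 1 := by simpa [d] using (Real.sqrt_lt' one_pos).2 (by linarith : a < 1 ^ 2)
  have hpow : ∀ i, ENNReal.ofReal a ^ i = (d ^ i) ^ 2 := fun i => by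
    rw [← pow_mul, mul_comm, pow_mul, ← ENNReal.ofReal_pow (Real.sqrt_nonneg a),
      Real.sq_sqrt ha0.le]
  refine ⟨2 * ((1 - d) ^ 2)⁻¹, mul_ne_top (by simp)
    (inv_ne_top.2 (pow_ne_zero _ (tsub_pos_of_lt hd1).ne')), fun g hg _ => ?_⟩
  rw [mul_assoc, two_mul]
  refine add_le_add ?_ ?_
  · refine mixedNorm_le_of_le_tsum_geometric hp hq hd0 hd1 (fun j i => g (j + i))
      (fun j i => hg _) (fun j x => by simp only [hpow]; rfl)
      fun M i => mixedModular_comp_add_le (fun j x => g j x / M) i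
  · refine mixedNorm_le_of_le_tsum_geometric hp hq hd0 hd1
      (fun j i x => if i ≤ j then g (j - i) x else 0)
      (fun j i => by by_cases h : i ≤ j <;> simp [h, hg _])
      (fun j x => by simpa only [hpow] using ENNReal.sum_range_mul_le_tsum_mul_ite _ (g · x) j)
      fun M i => by
        simpa [ite_div] using (mixedModular_shift_right_eq hp.2 (fun j x => g j x / M) i).le
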